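/- Suppose the finite simple graph H satisfies: (i) for every clique K of H (including the empty clique), the induced subgraph of H on V ∖ K is nonempty and connected; and (ii) for every clique K of H and every vertex v ∈ K, there is a vertex w ∉ K adjacent to v in H. Then the initial state 𝒮 together with the system of moves {m_{vw}} is a legal system on Γ = 𝕋(H): every state in the orbit M + 𝒮 = {m + 𝒮 : m ∈ M} is a legal state of Γ, i.e., its preimages of 0 and of 1 each induce a nonempty connected subgraph of Γ. -/

import Mathlib

/-- The vertex set of the thickened graph `𝕋(H)`: ordered pairs of distinct, non-adjacent
vertices of `H` (pairs at "cubical distance ≥ 2", where cubes are modeled by cliques of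
`H`). -/
def statePairs {V : Type*} (H : SimpleGraph V) : Set (V × V) :=
  {p | p.1 ≠ p.2 ∧ ¬ H.Adj p.1 p.2}

/-- The initial state `𝒮`: with respect to a fixed linear order on `V`, the pair `(v, w)`
is assigned `1` iff `v < w`. -/
def initialState {V : Type*} [LinearOrder V] (H : SimpleGraph V) :
    statePairs H → ZMod 2 :=
  fun p => if p.1.1 < p.1.2 then 1 else 0

open Classical in
/-- The move `m_{vw}`: the state taking the value `1` exactly at the vertices `(v, w)` and
`(w, v)` and `0` elsewhere. -/
noncomputable def move {V : Type*} (H : SimpleGraph V) (v w : V) :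
    statePairs H → ZMod 2 :=
  fun p => if p.1 = (v, w) ∨ p.1 = (w, v) then 1 else 0

/-- The subgroup `M` of the group of states (under pointwise addition) generated by all
the moves `m_{vw}` for `(v, w) ∈ P`. -/
noncomputable def moveGroup {V : Type*} (H : SimpleGraph V) :
    AddSubgroup (statePairs H → ZMod 2) :=
  AddSubgroup.closure {f | ∃ v w : V, (v, w) ∈ statePairs H ∧ f = move H v w}


/-- The thickened graph `Γ = 𝕋(H)` on the vertex set `P = statePairs H`: two distinct
pairs are adjacent iff their first coordinates are equal or adjacent in `H`. -/
def TGraph {V : Type*} (H : SimpleGraph V) : SimpleGraph (statePairs H) where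
  Adj p q := p ≠ q ∧ (p.1.1 = q.1.1 ∨ H.Adj p.1.1 q.1.1)
  symm := by
    constructor
    rintro p q ⟨h₁, h₂⟩
    refine ⟨h₁.symm, ?_⟩
    rcases h₂ with h | h
    · exact Or.inl h.symm
    · exact Or.inr h.symm
  loopless := by constructor; rintro p ⟨h₁, -⟩; exact h₁ rfl

/-- A state `φ` on the vertex set of a graph `Γ` is *legal* if the subgraphs induced on
`φ⁻¹(0)` and `φ⁻¹(1)` are both nonempty and connected. -/
def IsLegalState {W : Type*} (Γ : SimpleGraph W) (φ : W → ZMod 2) : Prop :=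
  ∀ ε : ZMod 2, (φ ⁻¹' {ε}).Nonempty ∧ (Γ.induce (φ ⁻¹' {ε})).Connected

/-! Every state `φ = m + 𝒮` in the orbit is antisymmetric: `φ (w, v) ≠ φ (v, w)`, since moves
are symmetric and `𝒮` is antisymmetric. For an antisymmetric state, the vertices `v` of `H`
that occur as first coordinate of some pair in `φ⁻¹(ε)` miss only a clique (two non-adjacent
missing vertices `x, y` would force `φ (x, y) = φ (y, x)`), so by (i) they span a nonempty
connected subgraph of `H`. Pairs sharing a first coordinate are adjacent in `Γ`, and an edge
of `H` between first coordinates is an edge of `Γ`, so walks lift and `φ⁻¹(ε)` is connected. -/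

section

variable {V : Type*} {H : SimpleGraph V}

lemma swap_mem_statePairs {p : V × V} (hp : p ∈ statePairs H) : p.swap ∈ statePairs H :=
  ⟨hp.1.symm, fun h => hp.2 h.symm⟩

def pairSwap (p : statePairs H) : statePairs H := ⟨p.1.swap, swap_mem_statePairs p.2⟩

lemma move_swap (v w : V) (p : statePairs H) : move H v w (pairSwap p) = move H v w p := by
  have h : (p.1.swap = (v, w) ∨ p.1.swap = (w, v)) ↔ (p.1 = (v, w) ∨ p.1 = (w, v)) := by
    simp only [Prod.swap_eq_iff_eq_swap, Prod.swap_prod_mk, or_comm]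
  classical
  exact if_congr h rfl rfl

lemma apply_swap_of_mem_moveGroup {m : statePairs H → ZMod 2} (hm : m ∈ moveGroup H)
    (p : statePairs H) : m (pairSwap p) = m p := by
  induction hm using AddSubgroup.closure_induction with
  | mem f hf =>
    obtain ⟨v, w, -, rfl⟩ := hf
    exact move_swap v w p
  | zero => rfl
  | add f g _ _ ihf ihg => simp only [Pi.add_apply, ihf, ihg]
  | neg f _ ihf => simp only [Pi.neg_apply, ihf]

lemma initialState_swap_ne [LinearOrder V] (p : statePairs H) :
    initialState H (pairSwap p) ≠ initialState H p := by
  rcases lt_or_gt_of_ne p.2.1 with h | h <;>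
    simp [initialState, pairSwap, h, not_lt_of_gt h]

lemma isClique_compl_image_fst {φ : statePairs H → ZMod 2} (hφ : ∀ p, φ (pairSwap p) ≠ φ p)
    (ε : ZMod 2) : H.IsClique ((fun p : statePairs H => p.1.1) '' (φ ⁻¹' {ε}))ᶜ := by
  intro x hx y hy hxy
  by_contra hadj
  let p : statePairs H := ⟨(x, y), hxy, hadj⟩
  have hp : φ p ≠ ε := fun h => hx ⟨p, h, rfl⟩
  have hp' : φ (pairSwap p) ≠ ε := fun h => hy ⟨pairSwap p, h, rfl⟩
  have two_values : ∀ a b ε : ZMod 2, a ≠ ε → b ≠ ε → a = b := by decide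
  exact hφ p (two_values _ _ _ hp' hp)

lemma reachable_induce_of_walk_image_fst {S : Set (statePairs H)}
    {a b : (fun p : statePairs H => p.1.1) '' S}
    (walk : (H.induce ((fun p : statePairs H => p.1.1) '' S)).Walk a b)
    {p q : S} (hp : p.1.1.1 = a) (hq : q.1.1.1 = b) :
    ((TGraph H).induce S).Reachable p q := by
  induction walk generalizing p with
  | nil =>
    by_cases hpq : p = q
    · exact hpq ▸ .refl p
    · exact SimpleGraph.Adj.reachable
        (G := (TGraph H).induce S) ⟨fun h => hpq (Subtype.ext h), .inl (hp.trans hq.symm)⟩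
  | @cons _ c _ hadj _ ih =>
    obtain ⟨r, hr, hrc⟩ := c.2
    have hpr : ((TGraph H).induce S).Adj p ⟨r, hr⟩ := by
      refine ⟨fun h => hadj.ne (Subtype.ext ?_), .inr ?_⟩
      · rw [← hp, ← hrc, show p.1 = r from h]
      · change H.Adj p.1.1.1 r.1.1
        rw [hp, show r.1.1 = c from hrc]
        exact hadj
    exact hpr.reachable.trans (ih hrc hq)

lemma preconnected_induce_of_preconnected_image_fst {S : Set (statePairs H)}
    (hS : (H.induce ((fun p : statePairs H => p.1.1) '' S)).Preconnected) :
    ((TGraph H).induce S).Preconnected := fun p q =>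
  let ⟨walk⟩ := hS ⟨p.1.1.1, p, p.2, rfl⟩ ⟨q.1.1.1, q, q.2, rfl⟩
  reachable_induce_of_walk_image_fst walk rfl rfl

theorem isLegalState_of_swap_ne
    (hconn : ∀ K : Set V, H.IsClique K → (Kᶜ).Nonempty ∧ (H.induce Kᶜ).Connected)
    {φ : statePairs H → ZMod 2} (hφ : ∀ p, φ (pairSwap p) ≠ φ p) :
    IsLegalState (TGraph H) φ := by
  refine fun ε => ?_
  obtain ⟨hA_ne, hA_conn⟩ := hconn _ (isClique_compl_image_fst hφ ε)
  rw [compl_compl] at hA_ne hA_conn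
  have hne : (φ ⁻¹' {ε}).Nonempty := Set.image_nonempty.mp hA_ne
  exact ⟨hne, (SimpleGraph.connected_iff _).mpr
    ⟨preconnected_induce_of_preconnected_image_fst hA_conn.preconnected, hne.to_subtype⟩⟩

end

theorem legal_system_of_thickening_general {V : Type*} [LinearOrder V]
    (H : SimpleGraph V)
    (hconn : ∀ K : Set V, H.IsClique K → (Kᶜ).Nonempty ∧ (H.induce Kᶜ).Connected)
    (m : statePairs H → ZMod 2) (hm : m ∈ moveGroup H) :
    IsLegalState (TGraph H) (m + initialState H) :=
  isLegalState_of_swap_ne hconn fun p => by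
    rw [Pi.add_apply, Pi.add_apply, apply_swap_of_mem_moveGroup hm p]
    exact (add_right_injective _).ne (initialState_swap_ne p)

/-- Suppose the finite simple graph `H` satisfies:
(i) for every clique `K` of `H` (including the empty clique), the induced subgraph of `H`
on the complement of `K` is nonempty and connected (no disconnecting cliques); and
(ii) for every clique `K` of `H` and vertex `v ∈ K` there is a vertex `w ∉ K` adjacent to
`v` (no isolated corners).
Then the initial state `𝒮` together with the system of moves `m_{vw}` is a legal system
on `Γ = 𝕋(H)`: every state in the orbit `M + 𝒮` is a legal state of `Γ`. -/
theorem legal_system_of_thickening {V : Type*} [Fintype V] [LinearOrder V]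
    (H : SimpleGraph V)
    (hconn : ∀ K : Set V, H.IsClique K → (Kᶜ).Nonempty ∧ (H.induce Kᶜ).Connected)
    (hcorner : ∀ K : Set V, H.IsClique K → ∀ v ∈ K, ∃ w ∉ K, H.Adj v w)
    (m : statePairs H → ZMod 2) (hm : m ∈ moveGroup H) :
    IsLegalState (TGraph H) (m + initialState H) :=
  legal_system_of_thickening_general H hconn m hm
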